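/- arXiv:1908.07342 — 4 statements merged into one kernel-verified Lean document; each statement's English description precedes it below -/
import Mathlib

section
/- Let γ ∈ (0, π) and β ∈ (0, π) satisfy β + γ/4 ≥ π/2 and β + γ/2 < π. Then sin(γ/4)/(sin β cos(γ/4) − cos β sin(γ/4)) ≤ tan(γ/2)/(2 sin β), with equality if and only if β + γ/4 = π/2. -/
open Real

theorem stmt_4 (γ β : ℝ) (hγ0 : 0 < γ) (hγπ : γ < π) (hβ0 : 0 < β) (hβπ : β < π)
    (h1 : π / 2 ≤ β + γ / 4) (h2 : β + γ / 2 < π) :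
    sin (γ / 4) / (sin β * cos (γ / 4) - cos β * sin (γ / 4)) ≤ tan (γ / 2) / (2 * sin β) ∧
    (sin (γ / 4) / (sin β * cos (γ / 4) - cos β * sin (γ / 4)) = tan (γ / 2) / (2 * sin β)
      ↔ β + γ / 4 = π / 2) := by
  have hπ := pi_pos
  have hs4 : 0 < sin (γ/4) := sin_pos_of_pos_of_lt_pi (by linarith) (by linarith)
  have hc4 : 0 < cos (γ/4) := cos_pos_of_mem_Ioo ⟨by linarith, by linarith⟩
  have hc2 : 0 < cos (γ/2) := cos_pos_of_mem_Ioo ⟨by linarith, by linarith⟩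
  have hsβ : 0 < sin β := sin_pos_of_pos_of_lt_pi hβ0 hβπ
  have hDeq : sin (β - γ/4) = sin β * cos (γ/4) - cos β * sin (γ/4) := sin_sub β (γ/4)
  have hD : 0 < sin β * cos (γ/4) - cos β * sin (γ/4) := by
    rw [← hDeq]; exact sin_pos_of_pos_of_lt_pi (by linarith) (by linarith)
  have hc2eq : cos (γ/2) = cos (γ/4)^2 - sin (γ/4)^2 := by
    rw [show γ/2 = γ/4 + γ/4 by ring, cos_add]; ring
  have hs2eq : sin (γ/2) = 2 * sin (γ/4) * cos (γ/4) := by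
    rw [show γ/2 = γ/4 + γ/4 by ring, sin_add]; ring
  have hkey : cos (γ/4) * (sin β * cos (γ/4) - cos β * sin (γ/4)) - cos (γ/2) * sin β
      = - cos (β + γ/4) * sin (γ/4) := by
    rw [hc2eq, cos_add]; ring
  have hcnp : cos (β + γ/4) ≤ 0 := cos_nonpos_of_pi_div_two_le_of_le h1 (by linarith)
  have hdiff : 0 ≤ cos (γ/4) * (sin β * cos (γ/4) - cos β * sin (γ/4)) - cos (γ/2) * sin β := by
    rw [hkey]; exact mul_nonneg (by linarith) hs4.le
  have htan : tan (γ/2) = sin (γ/2) / cos (γ/2) := tan_eq_sin_div_cos _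
  constructor
  · rw [htan, div_div, div_le_div_iff₀ hD (by positivity), hs2eq]
    nlinarith [mul_nonneg hdiff hs4.le]
  · constructor
    · intro heq
      rw [htan, div_div, div_eq_div_iff hD.ne' (by positivity), hs2eq] at heq
      have h0 : cos (β + γ/4) * sin (γ/4)^2 = 0 := by
        linear_combination (sin (γ/4)) * hkey + (1/2) * heq
      have hc0 : cos (β + γ/4) = 0 :=
        (mul_eq_zero.mp h0).resolve_right (pow_ne_zero 2 hs4.ne')
      rw [cos_eq_zero_iff] at hc0
      obtain ⟨n, hn⟩ := hc0
      have hn0 : n = 0 := by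
        have h0 : (0:ℝ) ≤ (n:ℝ) := by nlinarith
        have h1' : (n:ℝ) < 1 := by nlinarith
        have : (0:ℤ) ≤ n := by exact_mod_cast h0
        have : n < 1 := by exact_mod_cast h1'
        omega
      rw [hn0] at hn; push_cast at hn; linarith
    · intro heq
      have hc0 : cos (β + γ/4) = 0 := by rw [heq]; exact cos_pi_div_two
      rw [htan, div_div, div_eq_div_iff hD.ne' (by positivity), hs2eq]
      rw [hc0] at hkey
      linear_combination (-2 * sin (γ/4)) * hkey
end

section
/- Let γ ∈ (0, π) and β ∈ (0, π) satisfy β + γ/4 ≥ π/2 and β + γ/2 < π. Then −(1 − cos(γ/2))/(2 cos(β + γ/2) cos(γ/2)) ≤ tan(γ/2)/(2 sin β), with equality if and only if β + γ/4 = π/2. -/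
open Real

theorem stmt_5 (γ β : ℝ) (hγ0 : 0 < γ) (hγπ : γ < π) (hβ0 : 0 < β) (hβπ : β < π)
    (h1 : π / 2 ≤ β + γ / 4) (h2 : β + γ / 2 < π) :
    -(1 - cos (γ / 2)) / (2 * cos (β + γ / 2) * cos (γ / 2)) ≤ tan (γ / 2) / (2 * sin β) ∧
    (-(1 - cos (γ / 2)) / (2 * cos (β + γ / 2) * cos (γ / 2)) = tan (γ / 2) / (2 * sin β)
      ↔ β + γ / 4 = π / 2) := by
  have hpi := pi_pos
  have hc : 0 < cos (γ / 2) := by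
    apply cos_pos_of_mem_Ioo
    constructor
    · linarith
    · linarith
  have hsb : 0 < sin β := sin_pos_of_pos_of_lt_pi hβ0 hβπ
  have hs4 : 0 < sin (γ / 4) := sin_pos_of_pos_of_lt_pi (by linarith) (by linarith)
  have hC : cos (β + γ / 2) < 0 := by
    apply cos_neg_of_pi_div_two_lt_of_lt
    · linarith
    · linarith
  have h_id : sin (γ/2) * cos (β + γ/2) + (1 - cos (γ/2)) * sin β
      = 2 * sin (γ/4) * cos (γ/2) * cos (β + γ/4) := by
    have e1 : sin (γ/2) = 2 * sin (γ/4) * cos (γ/4) := by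
      rw [show γ/2 = 2*(γ/4) by ring, sin_two_mul]
    have e2 : cos (γ/2) = 2 * cos (γ/4)^2 - 1 := by
      rw [show γ/2 = 2*(γ/4) by ring, cos_two_mul]
    have e3 : cos (β + γ/2) = cos (β + γ/4) * cos (γ/4) - sin (β + γ/4) * sin (γ/4) := by
      rw [show β + γ/2 = (β + γ/4) + γ/4 by ring, cos_add]
    have e4 : sin β = sin (β + γ/4) * cos (γ/4) - cos (β + γ/4) * sin (γ/4) := by
      conv_lhs => rw [show β = (β + γ/4) - γ/4 by ring]
      exact sin_sub _ _
    rw [e1, e2, e3, e4]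
    linear_combination (-2 * cos (γ/4) * sin (β + γ/4)) * sin_sq_add_cos_sq (γ/4)
  have hden : 2 * cos (γ/2) * cos (β + γ/2) * sin β < 0 := by
    nlinarith [mul_pos hc hsb]
  have hcne := hc.ne'
  have hsbne := hsb.ne'
  have hCne := hC.ne
  have hdiff : tan (γ/2) / (2 * sin β) - -(1 - cos (γ/2)) / (2 * cos (β + γ/2) * cos (γ/2))
      = (2 * sin (γ/4) * cos (γ/2) * cos (β + γ/4)) /
        (2 * cos (γ/2) * cos (β + γ/2) * sin β) := by
    have habs : ∀ s c C b : ℝ, c ≠ 0 → C ≠ 0 → b ≠ 0 →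
        s / c / (2 * b) - -(1 - c) / (2 * C * c) = (s * C + (1 - c) * b) / (2 * c * C * b) := by
      intro s c C b hc hC hb
      field_simp
      ring
    rw [tan_eq_sin_div_cos, habs _ _ _ _ hcne hCne hsbne, h_id]
  have hc4 : cos (β + γ/4) ≤ 0 := by
    apply cos_nonpos_of_pi_div_two_le_of_le h1
    linarith
  have hnum_le : 2 * sin (γ/4) * cos (γ/2) * cos (β + γ/4) ≤ 0 := by
    nlinarith [mul_pos hs4 hc]
  have h0 : 0 ≤ tan (γ/2) / (2 * sin β)
      - -(1 - cos (γ/2)) / (2 * cos (β + γ/2) * cos (γ/2)) := by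
    rw [hdiff]
    exact div_nonneg_of_nonpos hnum_le hden.le
  refine ⟨by linarith, ?_, ?_⟩
  · intro heq
    have hz : (2 * sin (γ/4) * cos (γ/2) * cos (β + γ/4)) /
        (2 * cos (γ/2) * cos (β + γ/2) * sin β) = 0 := by
      rw [← hdiff, heq]; ring
    have hnum0 : (2 * sin (γ/4) * cos (γ/2)) * cos (β + γ/4) = 0 := by
      rcases div_eq_zero_iff.mp hz with h | h
      · linarith
      · linarith
    have hpos : 0 < 2 * sin (γ/4) * cos (γ/2) := by positivity
    have hcos0 : cos (β + γ/4) = 0 :=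
      (mul_eq_zero.mp hnum0).resolve_left hpos.ne'
    by_contra hne
    have hlt : π/2 < β + γ/4 := lt_of_le_of_ne h1 (fun h => hne h.symm)
    have : cos (β + γ/4) < 0 := cos_neg_of_pi_div_two_lt_of_lt hlt (by linarith)
    linarith
  · intro heq
    have hcos0 : cos (β + γ/4) = 0 := by rw [heq, cos_pi_div_two]
    have : tan (γ/2) / (2 * sin β)
        - -(1 - cos (γ/2)) / (2 * cos (β + γ/2) * cos (γ/2)) = 0 := by
      rw [hdiff, hcos0]; simp
    linarith
end

section
/- For s, t ∈ (0, 1), define κ_new(s,t) = min{ s/(1−s²) − s/2 + t, s + t/(1−t²) − t/2 } and κ_conv(s,t) = s/(1−s²) + t/(1−t²). Then κ_new(s,t)/κ_conv(s,t) < 3/4, and the supremum of κ_new/κ_conv over (0,1)² equals 3/4 (attained in the limit s, t → 0). -/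
noncomputable def κnew (s t : ℝ) : ℝ :=
  min (s / (1 - s ^ 2) - s / 2 + t) (s + t / (1 - t ^ 2) - t / 2)

noncomputable def κconv (s t : ℝ) : ℝ :=
  s / (1 - s ^ 2) + t / (1 - t ^ 2)

lemma ratio_lt (s t : ℝ) (hs : s ∈ Set.Ioo (0:ℝ) 1) (ht : t ∈ Set.Ioo (0:ℝ) 1) :
    κnew s t / κconv s t < 3 / 4 := by
  obtain ⟨hs0, hs1⟩ := hs
  obtain ⟨ht0, ht1⟩ := ht
  have hs2 : 0 < 1 - s ^ 2 := by nlinarith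
  have ht2 : 0 < 1 - t ^ 2 := by nlinarith
  have hA : s < s / (1 - s ^ 2) := by rw [lt_div_iff₀ hs2]; nlinarith [pow_pos hs0 3]
  have hB : t < t / (1 - t ^ 2) := by rw [lt_div_iff₀ ht2]; nlinarith [pow_pos ht0 3]
  have hc : 0 < κconv s t := by
    have := div_pos hs0 hs2
    have := div_pos ht0 ht2
    unfold κconv; linarith
  rw [div_lt_iff₀ hc]
  unfold κnew κconv
  have h1 := min_le_left (s / (1 - s ^ 2) - s / 2 + t) (s + t / (1 - t ^ 2) - t / 2)
  have h2 := min_le_right (s / (1 - s ^ 2) - s / 2 + t) (s + t / (1 - t ^ 2) - t / 2)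
  linarith

lemma ratio_eq (s : ℝ) (hs : s ∈ Set.Ioo (0:ℝ) 1) :
    κnew s s / κconv s s = 3 / 4 - s ^ 2 / 4 := by
  obtain ⟨hs0, hs1⟩ := hs
  have hs2 : 0 < 1 - s ^ 2 := by nlinarith
  have hsc : 0 < κconv s s := by
    have := div_pos hs0 hs2
    unfold κconv; linarith
  unfold κnew κconv at *
  have heq : s / (1 - s ^ 2) - s / 2 + s = s + s / (1 - s ^ 2) - s / 2 := by ring
  rw [heq, min_self, div_eq_iff (ne_of_gt hsc)]
  field_simp
  ring

theorem stmt_16 :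
    (∀ s t : ℝ, s ∈ Set.Ioo (0:ℝ) 1 → t ∈ Set.Ioo (0:ℝ) 1 →
      κnew s t / κconv s t < 3 / 4) ∧
    sSup {r : ℝ | ∃ s t : ℝ, s ∈ Set.Ioo (0:ℝ) 1 ∧ t ∈ Set.Ioo (0:ℝ) 1 ∧
      r = κnew s t / κconv s t} = 3 / 4 := by
  refine ⟨ratio_lt, ?_⟩
  apply csSup_eq_of_forall_le_of_forall_lt_exists_gt
  · exact ⟨_, 1/2, 1/2, ⟨by norm_num, by norm_num⟩, ⟨by norm_num, by norm_num⟩, rfl⟩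
  · rintro a ⟨s, t, hs, ht, rfl⟩
    exact (ratio_lt s t hs ht).le
  · intro w hw
    set s : ℝ := min (1/2) (Real.sqrt (3 - 4 * w) / 2) with hsdef
    have h34 : 0 < 3 - 4 * w := by linarith
    have hsq : 0 < Real.sqrt (3 - 4 * w) := Real.sqrt_pos.mpr h34
    have hs0 : 0 < s := lt_min (by norm_num) (by positivity)
    have hs1 : s < 1 := lt_of_le_of_lt (min_le_left _ _) (by norm_num)
    have hsle : s ≤ Real.sqrt (3 - 4 * w) / 2 := min_le_right _ _
    have hssq : s ^ 2 ≤ (3 - 4 * w) / 4 := by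
      have h := Real.sq_sqrt h34.le
      nlinarith [hs0]
    have hmem : s ∈ Set.Ioo (0:ℝ) 1 := ⟨hs0, hs1⟩
    refine ⟨κnew s s / κconv s s, ⟨s, s, hmem, hmem, rfl⟩, ?_⟩
    rw [ratio_eq s hmem]
    linarith
end

section
/- For θ ∈ (0, π/4] (i.e., with 2θ ∈ (0, π/2)) and φ ∈ [0, π/2 − θ), setting t = tan θ and u = tan φ, one has (tan 2θ / 2)·(1/tan θ − tan(θ − φ)) = 1 + (1 − 1/(1 + t u))·(1/cos 2θ), and this quantity is strictly less than 1 + 1/(2 cos 2θ). -/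
/-! Writing `t = tan θ`, `u = tan φ`, the double-angle and subtraction formulas turn the left side
into a rational function of `t, u`, and the identity is then algebra. Both `tan θ ^ 2 < 1` and
`tan θ * tan φ < 1` come from the positivity of the cosines of `2θ = θ + θ` and `θ + φ`, and the
bound follows because `0 ≤ tan θ * tan φ < 1` forces `1 - 1 / (1 + tan θ * tan φ) < 1 / 2`. -/

open Real

namespace Real

theorem tan_mul_tan_lt_one {x y : ℝ} (hx : 0 < cos x) (hy : 0 < cos y) (hxy : 0 < cos (x + y)) :
    tan x * tan y < 1 := by
  have key : 1 - tan x * tan y = cos (x + y) / (cos x * cos y) := by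
    rw [cos_add, tan_eq_sin_div_cos, tan_eq_sin_div_cos]
    field_simp
  have : 0 < 1 - tan x * tan y := key ▸ by positivity
  linarith

theorem tan_sub_of_cos_ne_zero {x y : ℝ} (hx : cos x ≠ 0) (hy : cos y ≠ 0) :
    tan (x - y) = (tan x - tan y) / (1 + tan x * tan y) :=
  tan_sub' ⟨cos_ne_zero_iff.1 hx, cos_ne_zero_iff.1 hy⟩

theorem one_div_cos_two_mul {x : ℝ} (h : cos (2 * x) ≠ -1) :
    1 / cos (2 * x) = (1 + tan x ^ 2) / (1 - tan x ^ 2) := by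
  rw [cos_eq_two_mul_tan_half_div_one_sub_tan_half_sq _ h, mul_div_cancel_left₀ x two_ne_zero,
    one_div_div]

end Real

theorem half_double_tan_mul_cot_sub_tan_sub_eq {t u : ℝ} (ht : t ≠ 0) (ht2 : 1 - t ^ 2 ≠ 0)
    (htu : 1 + t * u ≠ 0) :
    (2 * t / (1 - t ^ 2) / 2) * (1 / t - (t - u) / (1 + t * u)) =
      1 + (1 - 1 / (1 + t * u)) * ((1 + t ^ 2) / (1 - t ^ 2)) := by
  field_simp
  ring

theorem one_add_one_sub_one_div_mul_lt {p c : ℝ} (hp0 : 0 ≤ p) (hp1 : p < 1) (hc : 0 < c) :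
    1 + (1 - 1 / (1 + p)) * (1 / c) < 1 + 1 / (2 * c) := by
  have hhalf : 1 - 1 / (1 + p) < 1 / 2 := by
    rw [sub_lt_comm, lt_div_iff₀ (by linarith)]
    linarith
  calc 1 + (1 - 1 / (1 + p)) * (1 / c) < 1 + 1 / 2 * (1 / c) := by gcongr
    _ = 1 + 1 / (2 * c) := by ring

theorem stmt_19 (θ φ : ℝ) (hθ0 : 0 < θ) (hθ : θ < π / 4)
    (hφ0 : 0 ≤ φ) (hφ : φ < π / 2 - θ)
    (t u : ℝ) (ht : t = tan θ) (hu : u = tan φ) :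
    (tan (2 * θ) / 2) * (1 / tan θ - tan (θ - φ)) =
      1 + (1 - 1 / (1 + t * u)) * (1 / cos (2 * θ)) ∧
    (tan (2 * θ) / 2) * (1 / tan θ - tan (θ - φ)) < 1 + 1 / (2 * cos (2 * θ)) := by
  have hπ := pi_pos
  have hcθ : 0 < cos θ := cos_pos_of_mem_Ioo ⟨by linarith, by linarith⟩
  have hcφ : 0 < cos φ := cos_pos_of_mem_Ioo ⟨by linarith, by linarith⟩
  have hc2θ : 0 < cos (2 * θ) := cos_pos_of_mem_Ioo ⟨by linarith, by linarith⟩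
  have ht0 : 0 < t := ht ▸ tan_pos_of_pos_of_lt_pi_div_two hθ0 (by linarith)
  have hu0 : 0 ≤ u := hu ▸ tan_nonneg_of_nonneg_of_le_pi_div_two hφ0 (by linarith)
  have htt : t * t < 1 := ht ▸ tan_mul_tan_lt_one hcθ hcθ (by rwa [← two_mul])
  have htu : t * u < 1 :=
    ht ▸ hu ▸ tan_mul_tan_lt_one hcθ hcφ (cos_pos_of_mem_Ioo ⟨by linarith, by linarith⟩)
  have heq : (tan (2 * θ) / 2) * (1 / tan θ - tan (θ - φ)) =
      1 + (1 - 1 / (1 + t * u)) * (1 / cos (2 * θ)) := by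
    rw [tan_two_mul, tan_sub_of_cos_ne_zero hcθ.ne' hcφ.ne', one_div_cos_two_mul (by linarith),
      ← ht, ← hu]
    exact half_double_tan_mul_cot_sub_tan_sub_eq ht0.ne' (by nlinarith) (by positivity)
  exact ⟨heq, heq ▸ one_add_one_sub_one_div_mul_lt (by positivity) htu hc2θ⟩
end
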